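/- arXiv:1009.0932 — 2 statements merged into one kernel-verified Lean document; each statement's English description precedes it below -/
import Mathlib

section
/- Let (Ω, ℱ, P; (ℱ_s)) be a filtered probability space and fix times t ≤ T. Suppose γ maps each stopping time τ ≤ T to an adapted control γ[τ] : [t,T] × Ω → M and satisfies: for all stopping times τ₁, τ₂ and all s ∈ [t,T], almost surely on { min(τ₁,τ₂) > s } one has γ[τ₁]_r = γ[τ₂]_r for all r ∈ [t,s). Then for every stopping time τ ≤ T, almost surely γ[τ]_r(ω) = γ[T]_r(ω) for all r ∈ [t, τ(ω)). (I.e., a non-anticipating controller strategy coincides on [t,τ) with the single control γ[T].) -/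
open MeasureTheory Set Filter

/-!
Take `τ₂ ≡ T` in the non-anticipativity condition: for each fixed `s`, almost surely `γ[τ]` and
`γ[T]` agree on `[t, s)` whenever `s < τ`. Only countably many `s` are needed, since
`[t, τ(ω)) = ⋃ {[t, q) | q ∈ ℚ, q < τ(ω)}`, and countably many null sets are still null.
-/

theorem ae_forall_mem_Ico_of_forall_rat {α : Type*} {m : MeasurableSpace α} {μ : Measure α}
    {a : ℝ} {σ : α → ℝ} {p : ℝ → α → Prop}
    (h : ∀ q : ℚ, a ≤ q → ∀ᵐ x ∂μ, (q : ℝ) < σ x → ∀ r ∈ Ico a (q : ℝ), p r x) :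
    ∀ᵐ x ∂μ, ∀ r ∈ Ico a (σ x), p r x := by
  have h_all : ∀ᵐ x ∂μ, ∀ q : ℚ, a ≤ q → (q : ℝ) < σ x → ∀ r ∈ Ico a (q : ℝ), p r x := by
    rw [ae_all_iff]
    intro q
    by_cases haq : a ≤ q
    · filter_upwards [h q haq] with x hx _ using hx
    · exact Eventually.of_forall fun _ haq' => absurd haq' haq
  filter_upwards [h_all] with x hx r hr
  obtain ⟨q, hrq, hqσ⟩ := exists_rat_btwn hr.2
  exact hx q (hr.1.trans hrq.le) hqσ r ⟨hr.1, hrq⟩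

theorem controller_strategy_useless_general {Ω : Type*} {m : MeasurableSpace Ω}
    (P : Measure Ω)
    (ℱ : Filtration ℝ m) {M : Type*}
    (t T : ℝ)
    (γ : (Ω → ℝ) → ℝ → Ω → M)
    (hna : ∀ τ₁ τ₂ : Ω → ℝ, IsStoppingTime ℱ (fun ω => (τ₁ ω : WithTop ℝ)) → IsStoppingTime ℱ (fun ω => (τ₂ ω : WithTop ℝ)) →
      (∀ ω, τ₁ ω ≤ T) → (∀ ω, τ₂ ω ≤ T) →
      ∀ s ∈ Set.Icc t T,
        ∀ᵐ ω ∂P, s < min (τ₁ ω) (τ₂ ω) →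
          ∀ r ∈ Set.Ico t s, γ τ₁ r ω = γ τ₂ r ω) :
    ∀ τ : Ω → ℝ, IsStoppingTime ℱ (fun ω => (τ ω : WithTop ℝ)) → (∀ ω, τ ω ≤ T) →
      ∀ᵐ ω ∂P, ∀ r ∈ Set.Ico t (τ ω), γ τ r ω = γ (fun _ => T) r ω := by
  intro τ hτ hτT
  refine ae_forall_mem_Ico_of_forall_rat fun q htq => ?_
  by_cases hqT : (q : ℝ) ≤ T
  · filter_upwards [hna τ (fun _ => T) hτ (isStoppingTime_const ℱ T) hτT (fun _ => le_rfl) q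
      ⟨htq, hqT⟩] with ω hω hqτ
    exact hω (lt_min hqτ (hqτ.trans_le (hτT ω)))
  · exact Eventually.of_forall fun ω hqτ => absurd ((hqτ.trans_le (hτT ω)).le) hqT

/-- If γ maps stopping times τ ≤ T to M-valued controls on [t,T] and is
non-anticipating (for all stopping times τ₁, τ₂ and s ∈ [t,T], a.s. on {min(τ₁,τ₂) > s}
one has γ[τ₁]_r = γ[τ₂]_r for r ∈ [t,s)), then for every stopping time τ ≤ T, almost
surely γ[τ]_r = γ[T]_r for all r ∈ [t, τ(ω)). -/
theorem controller_strategy_useless {Ω : Type*} {m : MeasurableSpace Ω}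
    (P : Measure Ω) [IsProbabilityMeasure P]
    (ℱ : Filtration ℝ m) {M : Type*} [MetricSpace M]
    (t T : ℝ) (htT : t ≤ T)
    (γ : (Ω → ℝ) → ℝ → Ω → M)
    (hna : ∀ τ₁ τ₂ : Ω → ℝ, IsStoppingTime ℱ (fun ω => (τ₁ ω : WithTop ℝ)) → IsStoppingTime ℱ (fun ω => (τ₂ ω : WithTop ℝ)) →
      (∀ ω, τ₁ ω ≤ T) → (∀ ω, τ₂ ω ≤ T) →
      ∀ s ∈ Set.Icc t T,
        ∀ᵐ ω ∂P, s < min (τ₁ ω) (τ₂ ω) →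
          ∀ r ∈ Set.Ico t s, γ τ₁ r ω = γ τ₂ r ω) :
    ∀ τ : Ω → ℝ, IsStoppingTime ℱ (fun ω => (τ ω : WithTop ℝ)) → (∀ ω, τ ω ≤ T) →
      ∀ᵐ ω ∂P, ∀ r ∈ Set.Ico t (τ ω), γ τ r ω = γ (fun _ => T) r ω :=
  controller_strategy_useless_general P ℱ t T γ hna
end

section
/- Let (Ω, ℱ, P) be a probability space, t ∈ [0,T], and π a map from controls to [t,T]-valued random times. Suppose for all controls α, β the following holds P-a.s.: if min(π[α](ω), π[β](ω)) ≤ inf{ s ≥ t : α_s(ω) ≠ β_s(ω) } then π[α](ω) = π[β](ω). Then π is non-anticipating: for all controls α, β and s ∈ [t,T], 1_{{π[α] ≤ s}} = 1_{{π[β] ≤ s}} P-a.s. on { α_r = β_r for all r ∈ [t,s) }. -/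
open MeasureTheory Set

/-- If for all controls α, β, almost surely
"min(π[α], π[β]) ≤ inf{ s ≥ t : α_s ≠ β_s } (inf ∅ = +∞) implies π[α] = π[β]",
then π is non-anticipating: for all controls α, β and s ∈ [t,T], almost surely
1_{π[α] ≤ s} = 1_{π[β] ≤ s} on the event { α_r = β_r for all r ∈ [t,s) }. -/
theorem nonanticipating_of_strategy {Ω : Type*} {mΩ : MeasurableSpace Ω}
    (P : Measure Ω) [IsProbabilityMeasure P]
    {M : Type*} [MetricSpace M]
    (t T : ℝ) (htT : t ≤ T)
    (π : (ℝ → Ω → M) → Ω → ℝ)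
    (hrange : ∀ (α : ℝ → Ω → M) (ω : Ω), π α ω ∈ Set.Icc t T)
    (hstr : ∀ α β : ℝ → Ω → M,
      ∀ᵐ ω ∂P,
        (∀ s : ℝ, t ≤ s → α s ω ≠ β s ω → min (π α ω) (π β ω) ≤ s) →
        π α ω = π β ω) :
    ∀ α β : ℝ → Ω → M, ∀ s ∈ Set.Icc t T,
      ∀ᵐ ω ∂P, (∀ r ∈ Set.Ico t s, α r ω = β r ω) →
        (π α ω ≤ s ↔ π β ω ≤ s) := by
  intro α β s hs
  filter_upwards [hstr α β] with ω hω hagree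
  by_cases hle : π α ω ≤ s ∨ π β ω ≤ s
  · have key : π α ω = π β ω := by
      apply hω
      intro r htr hne
      have hrs : s ≤ r := by
        by_contra h
        exact hne (hagree r ⟨htr, lt_of_not_ge h⟩)
      rcases hle with h | h
      · exact le_trans (min_le_left _ _) (le_trans h hrs)
      · exact le_trans (min_le_right _ _) (le_trans h hrs)
    rw [key]
  · push_neg at hle
    simp [not_le.mpr hle.1, not_le.mpr hle.2]
end
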